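/- arXiv:1707.08026 — 2 statements merged into one kernel-verified Lean document; each statement's English description precedes it below -/
import Mathlib

section
/- Let G be a graph, let P be a set of vertices of G, let x1, x2, v be distinct vertices in P, and let S be a squeeze by v. If G − S has a path between x1 and x2 whose vertex set is exactly P, then G has a path between x1 and x2 whose vertex set is exactly P ∪ S. -/
/-!
Let `a` and `b` be the neighbours of `v` on the path; both lie in `R = N(v) \ S`. Each vertex
of `S` misses at most one vertex of `R`, so it is adjacent to `a` or to `b`; if `|S| = 2`, each
vertex of `R` also has a neighbour in `S`, which yields a matching `a ~ u`, `w ~ b` with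
`S = {u, w}`. Replacing `a, v, b` by `a, s, v, b` or `a, v, s, b` (`|S| = 1`) or by
`a, u, v, w, b` (`|S| = 2`) gives the required path.
-/

open SimpleGraph

/-- `t < toughness of G`: for every vertex cut `X` (a set whose removal leaves
more than one connected component), `t * (number of components of G - X) < |X|`. -/
def SimpleGraph.ToughnessGT {V : Type*} [Fintype V] (G : SimpleGraph V) (t : ℝ) : Prop :=
  ∀ X : Set V, 1 < Nat.card (G.induce Xᶜ).ConnectedComponent →
    t * Nat.card (G.induce Xᶜ).ConnectedComponent < X.ncard

/-- `G` is `t`-tough: for every vertex cut `X`, `t * (number of components) ≤ |X|`. -/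
def SimpleGraph.ToughGE {V : Type*} [Fintype V] (G : SimpleGraph V) (t : ℝ) : Prop :=
  ∀ X : Set V, 1 < Nat.card (G.induce Xᶜ).ConnectedComponent →
    t * Nat.card (G.induce Xᶜ).ConnectedComponent ≤ X.ncard

/-- `G` is a `k`-tree: it can be built from `K_k` by repeatedly adding a vertex
whose neighbourhood among the previously added vertices is a `k`-clique. -/
def SimpleGraph.IsKTree {V : Type*} [Fintype V] (k : ℕ) (G : SimpleGraph V) : Prop :=
  k ≤ Fintype.card V ∧
    ∃ e : V ≃ Fin (Fintype.card V),
      ∀ v : V, G.IsClique {w : V | G.Adj v w ∧ e w < e v} ∧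
        Set.ncard {w : V | G.Adj v w ∧ e w < e v} = min (e v : ℕ) k

/-- The bud of a vertex `v` in a `k`-tree: its neighbours of degree `k`. -/
def SimpleGraph.bud {V : Type*} (G : SimpleGraph V) (k : ℕ) (v : V) : Set V :=
  {w : V | G.Adj v w ∧ (G.neighborSet w).ncard = k}

/-- `v` is a twig of the `k`-tree `G`: `v` is not universal, the set `S` of its
neighbours of degree `k` is nonempty, and `N(v) \ S` induces `K_k`. -/
def SimpleGraph.IsTwig {V : Type*} (G : SimpleGraph V) (k : ℕ) (v : V) : Prop :=
  (∃ w, w ≠ v ∧ ¬ G.Adj v w) ∧ (G.bud k v).Nonempty ∧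
    G.IsClique (G.neighborSet v \ G.bud k v) ∧ (G.neighborSet v \ G.bud k v).ncard = k

/-- `S` is a squeeze by `v`. -/
def SimpleGraph.IsSqueeze {V : Type*} (G : SimpleGraph V) (v : V) (S : Set V) : Prop :=
  S ⊆ G.neighborSet v ∧ 1 ≤ S.ncard ∧ S.ncard ≤ 2 ∧
    2 ≤ (G.neighborSet v \ S).ncard ∧
    (∀ s ∈ S, (G.neighborSet v \ S).ncard - 1 ≤ ((G.neighborSet v \ S) ∩ G.neighborSet s).ncard) ∧
    (∀ r ∈ G.neighborSet v \ S, S.ncard - 1 ≤ (S ∩ G.neighborSet r).ncard)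

/-- A chordal graph: every cycle of length at least 4 has a chord, i.e. an edge of `G`
between two vertices of the cycle that is not an edge of the cycle. -/
def SimpleGraph.IsChordal {V : Type*} (G : SimpleGraph V) : Prop :=
  ∀ (v : V) (c : G.Walk v v), c.IsCycle → 4 ≤ c.length →
    ∃ x y, x ∈ c.support ∧ y ∈ c.support ∧ G.Adj x y ∧ s(x, y) ∉ c.edges

/-- `H` is a minor of `G`, witnessed by branch sets. -/
def SimpleGraph.HasMinor {V W : Type*} (G : SimpleGraph V) (H : SimpleGraph W) : Prop :=
  ∃ f : W → Set V, (∀ w, (f w).Nonempty) ∧ (∀ w, (G.induce (f w)).Connected) ∧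
    (Pairwise (Function.onFun Disjoint f)) ∧
    ∀ w₁ w₂, H.Adj w₁ w₂ → ∃ a ∈ f w₁, ∃ b ∈ f w₂, G.Adj a b

/-- Planarity, via Wagner's theorem: no `K₅` or `K_{3,3}` minor. -/
def SimpleGraph.IsPlanar {V : Type*} (G : SimpleGraph V) : Prop :=
  ¬ G.HasMinor (completeGraph (Fin 5)) ∧ ¬ G.HasMinor (completeBipartiteGraph (Fin 3) (Fin 3))

/-- `G` is `k`-connected. -/
def SimpleGraph.IsKConnected {V : Type*} [Fintype V] (k : ℕ) (G : SimpleGraph V) : Prop :=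
  k + 1 ≤ Fintype.card V ∧ ∀ X : Set V, X.ncard < k → (G.induce Xᶜ).Connected

/-- The square of a graph: two vertices are adjacent iff their distance is 1 or 2. -/
def SimpleGraph.square {V : Type*} (G : SimpleGraph V) : SimpleGraph V where
  Adj v w := v ≠ w ∧ (G.Adj v w ∨ ∃ u, G.Adj v u ∧ G.Adj u w)
  symm := ⟨by
    rintro v w ⟨hne, h | ⟨u, h1, h2⟩⟩
    · exact ⟨hne.symm, Or.inl h.symm⟩
    · exact ⟨hne.symm, Or.inr ⟨u, h2.symm, h1.symm⟩⟩⟩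
  loopless := ⟨by rintro v ⟨hne, -⟩; exact hne rfl⟩

/-- `G` is Hamilton-connected. -/
def SimpleGraph.IsHamiltonConnected {V : Type*} (G : SimpleGraph V) : Prop :=
  ∀ x y : V, x ≠ y → ∃ p : G.Walk x y, p.IsPath ∧ ∀ w, w ∈ p.support

lemma Set.exists_eq_pair_of_mem_of_ncard_eq_two {α : Type*} {s : Set α} {a : α}
    (h : s.ncard = 2) (ha : a ∈ s) : ∃ b, a ≠ b ∧ s = {a, b} := by
  obtain ⟨x, y, hxy, rfl⟩ := Set.ncard_eq_two.mp h
  rcases ha with rfl | rfl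
  exacts [⟨y, hxy, rfl⟩, ⟨x, hxy.symm, Set.pair_comm _ _⟩]

namespace SimpleGraph

variable {V : Type*} {G : SimpleGraph V}

namespace Walk

lemma exists_eq_append_cons_cons_of_mem_support {x y v : V} (p : G.Walk x y)
    (hv : v ∈ p.support) (hxv : x ≠ v) (hyv : y ≠ v) :
    ∃ (a b : V) (hav : G.Adj a v) (hvb : G.Adj v b) (p₁ : G.Walk x a) (p₂ : G.Walk b y),
      p = p₁.append (cons hav (cons hvb p₂)) := by
  classical
  obtain ⟨a', hxa', r, hr⟩ := exists_eq_cons_of_ne hxv (p.takeUntil v hv)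
  obtain ⟨a, p₁, hav, hcons⟩ := exists_cons_eq_concat hxa' r
  obtain ⟨b, hvb, p₂, hp₂⟩ := exists_eq_cons_of_ne hyv.symm (p.dropUntil v hv)
  refine ⟨a, b, hav, hvb, p₁, p₂, ?_⟩
  rw [← concat_append, ← hcons, ← hr, ← hp₂, take_spec]

lemma support_append_append_perm {x a b y : V} (p₁ : G.Walk x a) {q q' : G.Walk a b}
    (p₂ : G.Walk b y) {t : List V} (h : q'.support.tail.Perm (t ++ q.support.tail)) :
    (p₁.append (q'.append p₂)).support.Perm (t ++ (p₁.append (q.append p₂)).support) := by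
  simp only [support_append p₁, tail_support_append]
  refine ((h.append_right _).append_left _).trans ?_
  simpa only [List.append_assoc] using List.perm_append_comm_assoc _ _ _

lemma IsPath.of_support_perm {x y x' y' : V} {p : G.Walk x y} {p' : G.Walk x' y'}
    {t : List V} (hp : p.IsPath) (h : p'.support.Perm (t ++ p.support)) (ht : t.Nodup)
    (hdisj : ∀ x ∈ t, x ∉ p.support) : p'.IsPath := by
  rw [isPath_def, h.nodup_iff, List.nodup_append]
  exact ⟨ht, hp.support_nodup, fun x hx y hy hxy => hdisj x hx (hxy ▸ hy)⟩

end Walk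

namespace IsSqueeze

variable {v : V} {S : Set V}

lemma finite_neighborSet_diff (hS : G.IsSqueeze v S) : (G.neighborSet v \ S).Finite :=
  Set.finite_of_ncard_pos (by have := hS.2.2.2.1; omega)

lemma adj_or_adj (hS : G.IsSqueeze v S) {s a b : V} (hs : s ∈ S)
    (ha : a ∈ G.neighborSet v \ S) (hb : b ∈ G.neighborSet v \ S) (hab : a ≠ b) :
    G.Adj s a ∨ G.Adj s b := by
  by_contra! h
  have hsub : (G.neighborSet v \ S) ∩ G.neighborSet s ⊆ (G.neighborSet v \ S) \ {a, b} :=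
    fun x ⟨hxR, hxs⟩ => ⟨hxR, by rintro (rfl | rfl); exacts [h.1 hxs, h.2 hxs]⟩
  have hle := Set.ncard_le_ncard hsub hS.finite_neighborSet_diff.sdiff
  rw [Set.ncard_sdiff (Set.pair_subset ha hb), Set.ncard_pair hab] at hle
  have := hS.2.2.2.2.1 s hs
  have := hS.2.2.2.1
  omega

lemma exists_adj_of_ncard_eq_two (hS : G.IsSqueeze v S) (h2 : S.ncard = 2) {r : V}
    (hr : r ∈ G.neighborSet v \ S) : ∃ s ∈ S, G.Adj r s := by
  have := hS.2.2.2.2.2 r hr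
  exact Set.nonempty_of_ncard_ne_zero (s := S ∩ G.neighborSet r) (by omega)

lemma exists_adj_adj_of_ncard_eq_two (hS : G.IsSqueeze v S) (h2 : S.ncard = 2) {a b : V}
    (ha : a ∈ G.neighborSet v \ S) (hb : b ∈ G.neighborSet v \ S) (hab : a ≠ b) :
    ∃ u w, u ≠ w ∧ S = {u, w} ∧ G.Adj a u ∧ G.Adj w b := by
  obtain ⟨sa, hsa, hasa⟩ := hS.exists_adj_of_ncard_eq_two h2 ha
  obtain ⟨sb, hsb, hbsb⟩ := hS.exists_adj_of_ncard_eq_two h2 hb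
  obtain ⟨o, hne, rfl⟩ := Set.exists_eq_pair_of_mem_of_ncard_eq_two h2 hsa
  rcases hsb with rfl | rfl
  · rcases hS.adj_or_adj (Set.mem_insert_of_mem _ rfl) ha hb hab with hoa | hob
    · exact ⟨o, sb, hne.symm, Set.pair_comm _ _, hoa.symm, hbsb.symm⟩
    · exact ⟨sb, o, hne, rfl, hasa, hob⟩
  · exact ⟨sa, sb, hne, rfl, hasa, hbsb.symm⟩

/-- A walk from `a` to `b` that can replace the path `a, v, b`, picking up exactly `S`. -/
lemma exists_walk_support_tail_perm (hS : G.IsSqueeze v S) {a b : V}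
    (ha : a ∈ G.neighborSet v \ S) (hb : b ∈ G.neighborSet v \ S) (hab : a ≠ b) :
    ∃ (q : G.Walk a b) (t : List V), t.Nodup ∧ (∀ x, x ∈ t ↔ x ∈ S) ∧
      q.support.tail.Perm (t ++ [v, b]) := by
  rcases (by have := hS.2.1; have := hS.2.2.1; omega : S.ncard = 1 ∨ S.ncard = 2) with h1 | h2
  · obtain ⟨s, rfl⟩ := Set.ncard_eq_one.mp h1
    have hvs : G.Adj v s := hS.1 rfl
    rcases hS.adj_or_adj rfl ha hb hab with hsa | hsb
    · exact ⟨.cons hsa.symm (.cons hvs.symm (.cons hb.1 .nil)), [s], by simp, by simp, .refl _⟩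
    · exact ⟨.cons ha.1.symm (.cons hvs (.cons hsb .nil)), [s], by simp, by simp, .swap _ _ _⟩
  · obtain ⟨u, w, huw, rfl, hau, hwb⟩ := hS.exists_adj_adj_of_ncard_eq_two h2 ha hb hab
    have hvu : G.Adj v u := hS.1 (Set.mem_insert _ _)
    have hvw : G.Adj v w := hS.1 (Set.mem_insert_of_mem _ rfl)
    exact ⟨.cons hau (.cons hvu.symm (.cons hvw (.cons hwb .nil))), [u, w], by simp [huw],
      by simp, .cons _ (.swap _ _ _)⟩

end IsSqueeze

end SimpleGraph

theorem squeeze_path_extension_general {V : Type*} (G : SimpleGraph V) (P : Set V)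
    (x1 x2 v : V) (hv : v ∈ P)
    (h1v : x1 ≠ v) (h2v : x2 ≠ v)
    (S : Set V) (hS : G.IsSqueeze v S)
    (hpath : ∃ p : G.Walk x1 x2, p.IsPath ∧ (∀ w ∈ p.support, w ∉ S) ∧
      {w : V | w ∈ p.support} = P) :
    ∃ q : G.Walk x1 x2, q.IsPath ∧ {w : V | w ∈ q.support} = P ∪ S := by
  obtain ⟨p, hp, hpS, rfl⟩ := hpath
  obtain ⟨a, b, hav, hvb, p₁, p₂, rfl⟩ :=
    p.exists_eq_append_cons_cons_of_mem_support hv h1v h2v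
  have hab : a ≠ b := by
    have := (Walk.cons_isPath_iff _ _).mp hp.of_append_right
    rintro rfl
    exact this.2 (by simp)
  have haS : a ∉ S := hpS a (by simp)
  have hbS : b ∉ S := hpS b (by simp)
  obtain ⟨q, t, ht, htS, hq⟩ :=
    hS.exists_walk_support_tail_perm ⟨hav.symm, haS⟩ ⟨hvb, hbS⟩ hab
  have hperm := Walk.support_append_append_perm p₁ (q := .cons hav (.cons hvb .nil)) p₂ hq
  refine ⟨p₁.append (q.append p₂),
    hp.of_support_perm hperm ht fun x hx hxp => hpS x hxp ((htS x).mp hx), ?_⟩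
  ext x
  simp [hperm.mem_iff, htS, or_comm]

theorem squeeze_path_extension {V : Type*} (G : SimpleGraph V) (P : Set V)
    (x1 x2 v : V) (hx1 : x1 ∈ P) (hx2 : x2 ∈ P) (hv : v ∈ P)
    (h12 : x1 ≠ x2) (h1v : x1 ≠ v) (h2v : x2 ≠ v)
    (S : Set V) (hS : G.IsSqueeze v S)
    (hpath : ∃ p : G.Walk x1 x2, p.IsPath ∧ (∀ w ∈ p.support, w ∉ S) ∧
      {w : V | w ∈ p.support} = P) :
    ∃ q : G.Walk x1 x2, q.IsPath ∧ {w : V | w ∈ q.support} = P ∪ S :=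
  squeeze_path_extension_general G P x1 x2 v hv h1v h2v S hS hpath
end

section
/- Let T be a tree. The square T² is planar if and only if T has no vertex of degree greater than 3. -/
open SimpleGraph

/-!
Write `N[X]` for the closed neighbourhood of `X` in `T`. If `X` is connected in `T²` then `N[X]`
is connected in `T`, hence a subtree, and if `X`, `Y` are adjacent in `T²` then `N[X]` and
`N[Y]` meet. So the branch sets of a `K_k` minor of `T²` have pairwise intersecting closed
neighbourhoods, which share a vertex `m` by the Helly property of subtrees; the `k` disjoint
branch sets then meet `N[m]` in distinct vertices, and `m` has degree at least `k - 1`.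

For a `K_{3,3}` minor the same argument applies once the closed neighbourhoods of two branch sets
`X`, `Y` on the same side are known to meet. Otherwise an edge `pq` of `T` separates `N[X]` from
`N[Y]`, and a `T²`-connected set whose closed neighbourhood meets both must contain `p` or `q`,
since `T²`-steps cannot jump over an edge of `T`. This is impossible for the three disjoint
branch sets on the other side.
-/

open Function

namespace SimpleGraph

variable {V : Type*}

section Minor

variable {W : Type*} {G : SimpleGraph V} {H : SimpleGraph W}

lemma hasMinor_of_embedding (e : H ↪g G) : G.HasMinor H := by
  refine ⟨fun w => {e w}, fun _ => Set.singleton_nonempty _, fun _ => ?_, ?_,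
    fun w₁ w₂ h => ⟨e w₁, rfl, e w₂, rfl, e.map_adj_iff.2 h⟩⟩
  · rw [induce_singleton_eq_top]
    exact connected_top
  · intro w₁ w₂ hw
    simpa using e.injective.ne hw

lemma square_isClique_insert_neighborSet (G : SimpleGraph V) (v : V) :
    G.square.IsClique (insert v (G.neighborSet v)) := by
  rintro a (rfl | ha) b (rfl | hb) hab
  · exact absurd rfl hab
  · exact ⟨hab, Or.inl hb⟩
  · exact ⟨hab, Or.inl ha.symm⟩
  · exact ⟨hab, Or.inr ⟨v, ha.symm, hb⟩⟩

lemma square_hasMinor_completeGraph_of_le_ncard {v : V} (hfin : (G.neighborSet v).Finite)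
    {n : ℕ} (hn : n ≤ (G.neighborSet v).ncard) :
    G.square.HasMinor (completeGraph (Fin (n + 1))) := by
  classical
  have hcard : (insert v hfin.toFinset).card = (G.neighborSet v).ncard + 1 := by
    rw [Finset.card_insert_of_notMem (by simp), Set.ncard_eq_toFinset_card _ hfin]
  obtain ⟨t, hts, htn⟩ :=
    Finset.exists_subset_card_eq (s := insert v hfin.toFinset) (n := n + 1) (by omega)
  have hclique : G.square.IsNClique (n + 1) t :=
    ⟨(square_isClique_insert_neighborSet G v).subset (by simpa using Finset.coe_subset.2 hts),
      htn⟩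
  exact hasMinor_of_embedding (topEmbeddingOfNotCliqueFree hclique.not_cliqueFree)

end Minor

section ClosedNbhd

variable {G : SimpleGraph V} {X Y : Set V}

def closedNbhd (G : SimpleGraph V) (X : Set V) : Set V :=
  {v | ∃ x ∈ X, x = v ∨ G.Adj x v}

lemma subset_closedNbhd : X ⊆ G.closedNbhd X := fun x hx => ⟨x, hx, Or.inl rfl⟩

lemma closedNbhd_inter_nonempty_of_square_adj {a b : V} (ha : a ∈ X) (hb : b ∈ Y)
    (hab : G.square.Adj a b) : (G.closedNbhd X ∩ G.closedNbhd Y).Nonempty := by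
  rcases hab.2 with h | ⟨u, hau, hub⟩
  · exact ⟨a, subset_closedNbhd ha, b, hb, Or.inr h.symm⟩
  · exact ⟨u, ⟨a, ha, Or.inr hau⟩, b, hb, Or.inr hub.symm⟩

lemma preconnected_induce_closedNbhd (hX : (G.square.induce X).Preconnected) :
    (G.induce (G.closedNbhd X)).Preconnected := by
  let ι : X → G.closedNbhd X := fun x => ⟨x, subset_closedNbhd x.2⟩
  have reachable_of_anchor : ∀ (x : X) (v : G.closedNbhd X), (x : V) = v ∨ G.Adj x v →
      (G.induce (G.closedNbhd X)).Reachable (ι x) v := by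
    rintro x v (h | h)
    · exact (Subtype.ext h : ι x = v) ▸ Reachable.refl _
    · exact Adj.reachable h
  have reachable_of_square_adj : ∀ a b : X, (G.square.induce X).Adj a b →
      (G.induce (G.closedNbhd X)).Reachable (ι a) (ι b) := by
    intro a b hab
    rcases hab.2 with h | ⟨u, hau, hub⟩
    · exact Adj.reachable h
    · let u' : G.closedNbhd X := ⟨u, a, a.2, Or.inr hau⟩
      exact (reachable_of_anchor a u' (Or.inr hau)).trans
        (reachable_of_anchor b u' (Or.inr hub.symm)).symm
  rintro ⟨u, x, hx, hxu⟩ ⟨v, y, hy, hyv⟩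
  have hxy : (G.induce (G.closedNbhd X)).Reachable (ι ⟨x, hx⟩) (ι ⟨y, hy⟩) := by
    rw [reachable_iff_reflTransGen]
    refine Relation.ReflTransGen.lift' (r := (G.square.induce X).Adj) ι
      (fun a b hab => ?_) _ _ ?_
    · rw [onFun, ← reachable_iff_reflTransGen]
      exact reachable_of_square_adj a b hab
    · rw [← reachable_iff_reflTransGen]
      exact hX _ _
  exact (reachable_of_anchor _ _ hxu).symm.trans (hxy.trans (reachable_of_anchor _ _ hyv))

lemma card_le_ncard_neighborSet_add_one [Finite V] {ι : Type*} {X : ι → Set V}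
    (hX : Pairwise (Disjoint on X)) {m : V} (hm : ∀ i, m ∈ G.closedNbhd (X i)) :
    Nat.card ι ≤ (G.neighborSet m).ncard + 1 := by
  choose x hxX hxm using hm
  have hx : ∀ i, x i ∈ insert m (G.neighborSet m) := fun i => (hxm i).imp id Adj.symm
  have hinj : Injective x := fun i j hij => by
    by_contra hne
    exact Set.disjoint_left.1 (hX hne) (hxX i) (hij ▸ hxX j)
  calc Nat.card ι ≤ Nat.card (insert m (G.neighborSet m) : Set V) :=
        Nat.card_le_card_of_injective (fun i => ⟨x i, hx i⟩)
          fun i j h => hinj (congrArg Subtype.val h)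
    _ = (insert m (G.neighborSet m)).ncard := Nat.card_coe_set_eq _
    _ ≤ (G.neighborSet m).ncard + 1 := Set.ncard_insert_le _ _

end ClosedNbhd

section PathConvex

variable {G : SimpleGraph V} {S S₁ S₂ S₃ : Set V}

def IsPathConvex (G : SimpleGraph V) (S : Set V) : Prop :=
  ∀ ⦃x y : V⦄ (p : G.Walk x y), p.IsPath → x ∈ S → y ∈ S → ∀ v ∈ p.support, v ∈ S

lemma IsPathConvex.inter (h₁ : G.IsPathConvex S₁) (h₂ : G.IsPathConvex S₂) :
    G.IsPathConvex (S₁ ∩ S₂) :=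
  fun _ _ p hp hx hy v hv => ⟨h₁ p hp hx.1 hy.1 v hv, h₂ p hp hx.2 hy.2 v hv⟩

lemma isPathConvex_univ : G.IsPathConvex Set.univ := fun _ _ _ _ _ _ _ _ => trivial

lemma IsAcyclic.isPathConvex_of_preconnected (hG : G.IsAcyclic)
    (hS : (G.induce S).Preconnected) : G.IsPathConvex S := by
  classical
  intro x y p hp hx hy v hv
  obtain ⟨w⟩ := hS ⟨x, hx⟩ ⟨y, hy⟩
  let w' : G.Walk x y := w.map (Embedding.induce S).toHom
  have hpw : p = w'.bypass := congrArg Subtype.val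
    ((hG.subsingleton_path x y).elim ⟨p, hp⟩ ⟨w'.bypass, w'.bypass_isPath⟩)
  have hvw : v ∈ (w.map (Embedding.induce S).toHom).support :=
    w'.support_bypass_subset_support (hpw ▸ hv)
  rw [Walk.support_map] at hvw
  obtain ⟨u, -, rfl⟩ := List.mem_map.1 hvw
  exact u.2

lemma IsAcyclic.exists_mem_support_of_isPath (hG : G.IsAcyclic) {x y z : V}
    (p : G.Walk x y) (hp : p.IsPath) (q : G.Walk x z) (hq : q.IsPath) (r : G.Walk y z)
    (hr : r.IsPath) : ∃ m ∈ p.support, m ∈ q.support ∧ m ∈ r.support := by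
  classical
  induction p with
  | nil => exact ⟨_, Walk.start_mem_support _, q.start_mem_support, r.start_mem_support⟩
  | @cons x a y hxa p ih =>
    by_cases hxr : x ∈ r.support
    · exact ⟨x, (Walk.cons hxa p).start_mem_support, q.start_mem_support, hxr⟩
    rw [Walk.cons_isPath_iff] at hp
    -- the path from `a` to `z` avoids `x`, so prepending the edge `xa` gives the path `q`
    let q' := (p.append r).bypass
    have hxq' : x ∉ q'.support := fun h => by
      rcases (Walk.mem_support_append_iff _ _).1
        ((p.append r).support_bypass_subset_support h) with h | h
      · exact hp.2 h
      · exact hxr h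
    have hq : q = Walk.cons hxa q' := congrArg Subtype.val ((hG.subsingleton_path x z).elim
      ⟨q, hq⟩ ⟨_, (Walk.cons_isPath_iff _ _).2 ⟨Walk.bypass_isPath _, hxq'⟩⟩)
    obtain ⟨m, hmp, hmq, hmr⟩ := ih hp.1 q' (Walk.bypass_isPath _) r hr
    exact ⟨m, List.mem_cons_of_mem _ hmp, hq ▸ List.mem_cons_of_mem _ hmq, hmr⟩

lemma IsTree.inter_inter_nonempty (hT : G.IsTree) (h₁ : G.IsPathConvex S₁)
    (h₂ : G.IsPathConvex S₂) (h₃ : G.IsPathConvex S₃) (h₁₂ : (S₁ ∩ S₂).Nonempty)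
    (h₁₃ : (S₁ ∩ S₃).Nonempty) (h₂₃ : (S₂ ∩ S₃).Nonempty) : (S₁ ∩ S₂ ∩ S₃).Nonempty := by
  obtain ⟨x, hx₁, hx₂⟩ := h₁₂
  obtain ⟨y, hy₁, hy₃⟩ := h₁₃
  obtain ⟨z, hz₂, hz₃⟩ := h₂₃
  obtain ⟨p, hp⟩ := (hT.connected x y).exists_isPath
  obtain ⟨q, hq⟩ := (hT.connected x z).exists_isPath
  obtain ⟨r, hr⟩ := (hT.connected y z).exists_isPath
  obtain ⟨m, hmp, hmq, hmr⟩ := hT.isAcyclic.exists_mem_support_of_isPath p hp q hq r hr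
  exact ⟨m, ⟨h₁ p hp hx₁ hy₁ m hmp, h₂ q hq hx₂ hz₂ m hmq⟩, h₃ r hr hy₃ hz₃ m hmr⟩

/-- The extra set `S₀` drives the induction: the first member of the family is absorbed into it,
which also keeps the empty family from losing track of a point. -/
lemma IsTree.exists_mem_of_pairwise_inter_nonempty' (hT : G.IsTree) {ι : Type*} [Finite ι]
    {S₀ : Set V} (S : ι → Set V) (h₀ : G.IsPathConvex S₀) (hS : ∀ i, G.IsPathConvex (S i))
    (hS₀ : S₀.Nonempty) (hS₀S : ∀ i, (S₀ ∩ S i).Nonempty)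
    (hSS : ∀ i j, (S i ∩ S j).Nonempty) : ∃ m ∈ S₀, ∀ i, m ∈ S i := by
  induction ι using Finite.induction_empty_option generalizing S₀ with
  | of_equiv e ih =>
    obtain ⟨m, hm₀, hm⟩ :=
      ih (S ∘ e) h₀ (fun i => hS _) hS₀ (fun i => hS₀S _) fun i j => hSS _ _
    exact ⟨m, hm₀, fun i => e.apply_symm_apply i ▸ hm (e.symm i)⟩
  | h_empty => exact ⟨hS₀.some, hS₀.some_mem, fun i => i.elim⟩
  | h_option ih =>
    obtain ⟨m, hm₀, hm⟩ := ih (fun i => S (some i)) (h₀.inter (hS none)) (fun i => hS _)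
      (hS₀S none) (fun i => hT.inter_inter_nonempty h₀ (hS none) (hS _) (hS₀S none)
        (hS₀S _) (hSS none _)) fun i j => hSS _ _
    exact ⟨m, hm₀.1, Option.rec hm₀.2 hm⟩

lemma IsTree.exists_mem_of_pairwise_inter_nonempty (hT : G.IsTree) {ι : Type*} [Finite ι]
    (S : ι → Set V) (hS : ∀ i, G.IsPathConvex (S i)) (hSS : ∀ i j, (S i ∩ S j).Nonempty) :
    ∃ m, ∀ i, m ∈ S i := by
  have := hT.connected.nonempty
  obtain ⟨m, -, hm⟩ := hT.exists_mem_of_pairwise_inter_nonempty' S isPathConvex_univ hS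
    Set.univ_nonempty (fun i => by simpa using hSS i i) hSS
  exact ⟨m, hm⟩

end PathConvex

section EdgeSide

variable {G : SimpleGraph V} {p q a b : V}

def edgeSide (G : SimpleGraph V) (p q : V) : Set V :=
  {v | (G.deleteEdges {s(p, q)}).Reachable v p}

lemma eq_and_eq_of_adj_of_mem_edgeSide (hab : G.Adj a b) (ha : a ∈ G.edgeSide p q)
    (hb : b ∉ G.edgeSide p q) : a = p ∧ b = q := by
  have hedge : s(a, b) = s(p, q) := by
    by_contra hne
    have hba : (G.deleteEdges {s(p, q)}).Adj b a :=
      deleteEdges_adj.2 ⟨hab.symm, by simpa [Sym2.eq_swap] using hne⟩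
    exact hb (hba.reachable.trans ha)
  rcases Sym2.eq_iff.1 hedge with ⟨rfl, rfl⟩ | ⟨rfl, rfl⟩
  · exact ⟨rfl, rfl⟩
  · exact absurd Reachable.rfl hb

lemma eq_or_eq_of_square_adj_of_mem_edgeSide (hab : G.square.Adj a b)
    (ha : a ∈ G.edgeSide p q) (hb : b ∉ G.edgeSide p q) : a = p ∨ b = q := by
  rcases hab.2 with h | ⟨u, hau, hub⟩
  · exact Or.inl (eq_and_eq_of_adj_of_mem_edgeSide h ha hb).1
  · by_cases hu : u ∈ G.edgeSide p q
    · exact Or.inr (eq_and_eq_of_adj_of_mem_edgeSide hub hu hb).2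
    · exact Or.inl (eq_and_eq_of_adj_of_mem_edgeSide hau ha hu).1

lemma mem_or_mem_of_square_preconnected {Z : Set V} (hZ : (G.square.induce Z).Preconnected)
    (ha : a ∈ Z) (hb : b ∈ Z) (has : a ∈ G.edgeSide p q) (hbs : b ∉ G.edgeSide p q) :
    p ∈ Z ∨ q ∈ Z := by
  obtain ⟨w⟩ := hZ ⟨a, ha⟩ ⟨b, hb⟩
  obtain ⟨d, -, hd₁, hd₂⟩ := w.exists_boundary_dart (Subtype.val ⁻¹' G.edgeSide p q) has hbs
  rcases eq_or_eq_of_square_adj_of_mem_edgeSide d.adj hd₁ hd₂ with h | h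
  · exact Or.inl (h ▸ d.fst.2)
  · exact Or.inr (h ▸ d.snd.2)

lemma mem_or_mem_of_square_preconnected_of_mem_closedNbhd {Z : Set V}
    (hZ : (G.square.induce Z).Preconnected) (ha : a ∈ G.closedNbhd Z)
    (hb : b ∈ G.closedNbhd Z) (has : a ∈ G.edgeSide p q) (hbs : b ∉ G.edgeSide p q) :
    p ∈ Z ∨ q ∈ Z := by
  obtain ⟨x, hxZ, hxa⟩ := ha
  obtain ⟨y, hyZ, hyb⟩ := hb
  by_cases hx : x ∈ G.edgeSide p q
  · by_cases hy : y ∈ G.edgeSide p q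
    · rcases hyb with rfl | hyb
      · exact absurd hy hbs
      · exact Or.inl ((eq_and_eq_of_adj_of_mem_edgeSide hyb hy hbs).1 ▸ hyZ)
    · exact mem_or_mem_of_square_preconnected hZ hxZ hyZ hx hy
  · rcases hxa with rfl | hxa
    · exact absurd has hx
    · exact Or.inr ((eq_and_eq_of_adj_of_mem_edgeSide hxa.symm has hx).2 ▸ hxZ)

lemma IsTree.exists_adj_subset_edgeSide_disjoint_edgeSide (hT : G.IsTree) {A B : Set V}
    (hA : G.IsPathConvex A) (hB : G.IsPathConvex B) (hAB : Disjoint A B) (ha : a ∈ A)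
    (hb : b ∈ B) : ∃ p q, G.Adj p q ∧ A ⊆ G.edgeSide p q ∧ Disjoint B (G.edgeSide p q) := by
  classical
  obtain ⟨P, hP⟩ := (hT.connected a b).exists_isPath
  obtain ⟨d, hdP, hpA, hqA⟩ := P.exists_boundary_dart A ha (Set.disjoint_right.1 hAB hb)
  have hA_side : A ⊆ G.edgeSide d.fst d.snd := fun v hv => by
    obtain ⟨R, hR⟩ := (hT.connected v d.fst).exists_isPath
    exact reachable_deleteEdges_iff_exists_walk.2
      ⟨R, fun he => hqA (hA R hR hv hpA _ (R.snd_mem_support_of_mem_edges he))⟩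
  refine ⟨d.fst, d.snd, d.adj, hA_side, Set.disjoint_left.2 fun v hvB hv => ?_⟩
  obtain ⟨R, hR⟩ := (hT.connected v b).exists_isPath
  have hb_side : b ∈ G.edgeSide d.fst d.snd :=
    (reachable_deleteEdges_iff_exists_walk.2 ⟨R, fun he => Set.disjoint_left.1 hAB hpA
      (hB R hR hvB hb _ (R.fst_mem_support_of_mem_edges he))⟩).symm.trans hv
  -- the unique path `P` from `a` to `b` crosses `pq`, so `a` and `b` are on different sides
  obtain ⟨W, hW⟩ := reachable_deleteEdges_iff_exists_walk.1 ((hA_side ha).trans hb_side.symm)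
  have hWP : W.bypass = P := congrArg Subtype.val
    ((hT.isAcyclic.subsingleton_path a b).elim ⟨_, W.bypass_isPath⟩ ⟨P, hP⟩)
  exact hW (W.edges_bypass_subset_edges (hWP ▸ List.mem_map_of_mem hdP))

end EdgeSide

lemma card_le_two_of_pairwise_disjoint_of_mem_or_mem {ι : Type*} {Z : ι → Set V}
    (hZ : Pairwise (Disjoint on Z)) {p q : V} (hpq : ∀ i, p ∈ Z i ∨ q ∈ Z i) :
    Nat.card ι ≤ 2 := by
  classical
  have hinj : Injective fun i => decide (p ∈ Z i) := fun i j hij => by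
    by_contra hne
    have hdisj := Set.disjoint_left.1 (hZ hne)
    by_cases hp : p ∈ Z i
    · exact hdisj hp (by simpa [hp] using hij)
    · have hpj : p ∉ Z j := by simpa [hp] using hij
      exact hdisj ((hpq i).resolve_left hp) ((hpq j).resolve_left hpj)
  simpa using Nat.card_le_card_of_injective _ hinj

section TreeSquare

variable {T : SimpleGraph V}

theorem IsTree.exists_card_le_of_pairwise_closedNbhd_inter_nonempty (hT : T.IsTree) [Finite V]
    {ι : Type*} [Finite ι] (X : ι → Set V) (hX : Pairwise (Disjoint on X))
    (hconn : ∀ i, (T.square.induce (X i)).Preconnected)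
    (hmeet : ∀ i j, (T.closedNbhd (X i) ∩ T.closedNbhd (X j)).Nonempty) :
    ∃ m, Nat.card ι ≤ (T.neighborSet m).ncard + 1 := by
  obtain ⟨m, hm⟩ := hT.exists_mem_of_pairwise_inter_nonempty (fun i => T.closedNbhd (X i))
    (fun i => hT.isAcyclic.isPathConvex_of_preconnected
      (preconnected_induce_closedNbhd (hconn i))) hmeet
  exact ⟨m, card_le_ncard_neighborSet_add_one hX hm⟩

theorem IsTree.exists_card_le_of_square_hasMinor_completeGraph (hT : T.IsTree) [Finite V]
    {ι : Type*} [Finite ι] (h : T.square.HasMinor (completeGraph ι)) :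
    ∃ m, Nat.card ι ≤ (T.neighborSet m).ncard + 1 := by
  obtain ⟨X, hne, hconn, hX, hadj⟩ := h
  refine hT.exists_card_le_of_pairwise_closedNbhd_inter_nonempty X hX
    (fun i => (hconn i).preconnected) fun i j => ?_
  rcases eq_or_ne i j with rfl | hij
  · obtain ⟨x, hx⟩ := hne i
    exact ⟨x, subset_closedNbhd hx, subset_closedNbhd hx⟩
  · obtain ⟨a, ha, b, hb, hab⟩ := hadj i j hij
    exact closedNbhd_inter_nonempty_of_square_adj ha hb hab

theorem IsTree.exists_mem_or_mem_of_square_preconnected (hT : T.IsTree) {X Y : Set V}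
    (hX : (T.square.induce X).Preconnected) (hY : (T.square.induce Y).Preconnected)
    (hXY : Disjoint (T.closedNbhd X) (T.closedNbhd Y)) {x y : V} (hx : x ∈ X) (hy : y ∈ Y) :
    ∃ p q, ∀ Z : Set V, (T.square.induce Z).Preconnected →
      (T.closedNbhd X ∩ T.closedNbhd Z).Nonempty →
      (T.closedNbhd Y ∩ T.closedNbhd Z).Nonempty → p ∈ Z ∨ q ∈ Z := by
  obtain ⟨p, q, -, hXs, hYs⟩ := hT.exists_adj_subset_edgeSide_disjoint_edgeSide
    (hT.isAcyclic.isPathConvex_of_preconnected (preconnected_induce_closedNbhd hX))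
    (hT.isAcyclic.isPathConvex_of_preconnected (preconnected_induce_closedNbhd hY)) hXY
    (subset_closedNbhd hx) (subset_closedNbhd hy)
  refine ⟨p, q, fun Z hZ ⟨a, haX, haZ⟩ ⟨b, hbY, hbZ⟩ => ?_⟩
  exact mem_or_mem_of_square_preconnected_of_mem_closedNbhd hZ haZ hbZ (hXs haX)
    (Set.disjoint_left.1 hYs hbY)

theorem IsTree.closedNbhd_inter_nonempty_of_three_disjoint (hT : T.IsTree) {X Y : Set V}
    (hX : (T.square.induce X).Preconnected) (hY : (T.square.induce Y).Preconnected)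
    (Z : Fin 3 → Set V) (hZ : Pairwise (Disjoint on Z))
    (hZconn : ∀ j, (T.square.induce (Z j)).Preconnected)
    (hXZ : ∀ j, (T.closedNbhd X ∩ T.closedNbhd (Z j)).Nonempty)
    (hYZ : ∀ j, (T.closedNbhd Y ∩ T.closedNbhd (Z j)).Nonempty) :
    (T.closedNbhd X ∩ T.closedNbhd Y).Nonempty := by
  by_contra hXY
  obtain ⟨-, ⟨x, hx, -⟩, -⟩ := hXZ 0
  obtain ⟨-, ⟨y, hy, -⟩, -⟩ := hYZ 0
  obtain ⟨p, q, hpq⟩ := hT.exists_mem_or_mem_of_square_preconnected hX hY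
    (Set.disjoint_iff_inter_eq_empty.2 (Set.not_nonempty_iff_eq_empty.1 hXY)) hx hy
  have := card_le_two_of_pairwise_disjoint_of_mem_or_mem hZ fun j =>
    hpq _ (hZconn j) (hXZ j) (hYZ j)
  simp at this

theorem IsTree.exists_five_le_ncard_of_square_hasMinor_completeBipartiteGraph (hT : T.IsTree)
    [Finite V] (h : T.square.HasMinor (completeBipartiteGraph (Fin 3) (Fin 3))) :
    ∃ m, 5 ≤ (T.neighborSet m).ncard := by
  obtain ⟨X, -, hconn, hX, hadj⟩ := h
  have hpre : ∀ w, (T.square.induce (X w)).Preconnected := fun w => (hconn w).preconnected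
  have hcross : ∀ i j, (T.closedNbhd (X (.inl i)) ∩ T.closedNbhd (X (.inr j))).Nonempty :=
    fun i j => by
      obtain ⟨a, ha, b, hb, hab⟩ := hadj (.inl i) (.inr j) (by simp)
      exact closedNbhd_inter_nonempty_of_square_adj ha hb hab
  have hmeet : ∀ w w', (T.closedNbhd (X w) ∩ T.closedNbhd (X w')).Nonempty := by
    rintro (i | i) (j | j)
    · exact hT.closedNbhd_inter_nonempty_of_three_disjoint (hpre _) (hpre _) _
        (hX.comp_of_injective Sum.inr_injective) (fun k => hpre _) (hcross i) (hcross j)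
    · exact hcross i j
    · exact Set.inter_comm _ _ ▸ hcross j i
    · exact hT.closedNbhd_inter_nonempty_of_three_disjoint (hpre _) (hpre _) _
        (hX.comp_of_injective Sum.inl_injective) (fun k => hpre _)
        (fun k => Set.inter_comm _ _ ▸ hcross k i) (fun k => Set.inter_comm _ _ ▸ hcross k j)
  obtain ⟨m, hm⟩ := hT.exists_card_le_of_pairwise_closedNbhd_inter_nonempty X hX hpre hmeet
  exact ⟨m, by simpa using hm⟩

end TreeSquare

end SimpleGraph

theorem square_of_tree_planar_iff {V : Type*} [Fintype V]
    (T : SimpleGraph V) (hT : T.IsTree) :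
    T.square.IsPlanar ↔ ∀ v : V, (T.neighborSet v).ncard ≤ 3 := by
  refine ⟨fun hplanar v => ?_, fun hdeg => ⟨fun hK₅ => ?_, fun hK₃₃ => ?_⟩⟩
  · by_contra! hv
    exact hplanar.1 (square_hasMinor_completeGraph_of_le_ncard (Set.toFinite _) (n := 4) hv)
  · obtain ⟨m, hm⟩ := hT.exists_card_le_of_square_hasMinor_completeGraph hK₅
    have := hdeg m
    simp only [Nat.card_eq_fintype_card, Fintype.card_fin] at hm
    omega
  · obtain ⟨m, hm⟩ := hT.exists_five_le_ncard_of_square_hasMinor_completeBipartiteGraph hK₃₃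
    have := hdeg m
    omega
end
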